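/- Let K be a field, k ≥ 2, and let the recurrence data α_j, β_j, γ_j ∈ K with α_j ≠ 0 define the polynomials φ_j as usual. Fix λ_0 ∈ K and set φ := Φ_k(λ_0) ∈ K^k (evaluation of the basis at λ_0, whose last coordinate is 1). Let D_i ∈ K^{m×m} (i = 0,…,k), D_0^{ev} := Σ_{i=0}^{k} D_i φ_i(λ_0), let A ∈ K^{n×n}, B ∈ K^{n×m}, C ∈ K^{m×n}, and let X, Y ∈ K^{n×n} and K_0 := [v⊗I_m, H] ∈ K^{km×km} (v ∈ K^k, H ∈ K^{km×(k−1)m}) all be invertible, and assume λ_0I_n − A is invertible. Set G_0 := D_0^{ev} + C(λ_0I_n−A)^{−1}B, L_0 := K_0·F_Φ^D(λ_0), and 𝓛_0 := [[X(λ_0I_n−A)Y, [0_{n×(k−1)m}, XB]], [−(v⊗I_m)CY, L_0]] ∈ K^{(n+km)×(n+km)}. Then: (a) if 𝓛_0·(y;x) = 0 with (y;x) ≠ 0, where y ∈ K^n and x ∈ K^{km} has blocks x^{(1)},…,x^{(k)} ∈ K^m, then x^{(k)} ≠ 0, x = φ ⊗ x^{(k)}, and G_0·x^{(k)} = 0;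 (b) conversely, if G_0 u = 0 with u ≠ 0, and x := φ⊗u, y := −Y^{−1}(λ_0I_n−A)^{−1}Bu, then 𝓛_0·(y;x) = 0 and (y;x) ≠ 0. -/

import Mathlib

open Matrix

/-- The matrix `v ⊗ I_m ∈ R^{km×m}` built from a vector `v ∈ R^k`. -/
def vKron {R : Type*} [Semiring R] (k m : ℕ) (v : Fin k → R) :
    Matrix (Fin k × Fin m) (Fin m) R :=
  Matrix.of fun p j => if p.2 = j then v p.1 else 0

/-- Evaluation of the pencil `M_Φ(λ) ∈ F[λ]^{(k-1)×k}` at `λ₀`. -/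
noncomputable def MPhiEval {K : Type*} [Field K] (α β γ : ℕ → K) (k : ℕ) (lam0 : K) :
    Matrix (Fin (k - 1)) (Fin k) K :=
  Matrix.of fun i j =>
    if (j : ℕ) = (i : ℕ) then -(α (k - 2 - (i : ℕ)))
    else if (j : ℕ) = (i : ℕ) + 1 then lam0 - β (k - 2 - (i : ℕ))
    else if (j : ℕ) = (i : ℕ) + 2 then -(γ (k - 2 - (i : ℕ)))
    else 0

/-- Evaluation of the block row `m_Φ^D(λ) ∈ F[λ]^{m×km}` at `λ₀`. -/
noncomputable def mPhiEval {K : Type*} [Field K] (α β γ : ℕ → K) (k m : ℕ)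
    (D : ℕ → Matrix (Fin m) (Fin m) K) (lam0 : K) :
    Matrix (Fin m) (Fin k × Fin m) K :=
  Matrix.of fun r c =>
    if (c.1 : ℕ) = 0 then
      (α (k - 1))⁻¹ * (lam0 - β (k - 1)) * D k r c.2 + D (k - 1) r c.2
    else if (c.1 : ℕ) = 1 then
      D (k - 2) r c.2 - (α (k - 1))⁻¹ * γ (k - 1) * D k r c.2
    else D (k - 1 - (c.1 : ℕ)) r c.2

/-- Evaluation of the pencil `F_Φ^D(λ) = [m_Φ^D(λ); M_Φ(λ) ⊗ I_m]` at `λ₀`. -/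
noncomputable def FPhiEval {K : Type*} [Field K] (α β γ : ℕ → K) (k m : ℕ)
    (D : ℕ → Matrix (Fin m) (Fin m) K) (lam0 : K) :
    Matrix (Fin k × Fin m) (Fin k × Fin m) K :=
  Matrix.of fun p q =>
    if h : (p.1 : ℕ) = 0 then mPhiEval α β γ k m D lam0 p.2 q
    else
      MPhiEval α β γ k lam0 ⟨(p.1 : ℕ) - 1, by have := p.1.isLt; omega⟩ q.1
        * (if p.2 = q.2 then 1 else 0)

/-- The constant `km × km` matrix `[v ⊗ I_m, H]`. -/
def concatKron {K : Type*} [Field K] (k m : ℕ) (v : Fin k → K)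
    (H : Matrix (Fin k × Fin m) (Fin (k - 1) × Fin m) K) :
    Matrix (Fin k × Fin m) (Fin k × Fin m) K :=
  Matrix.of fun p q =>
    if h : (q.1 : ℕ) = 0 then (if p.2 = q.2 then v p.1 else 0)
    else H p (⟨(q.1 : ℕ) - 1, by have := q.1.isLt; omega⟩, q.2)


/-!
The block rows `M_Φ(λ₀) ⊗ I_m` of `F_Φ^D(λ₀)` encode the three-term recurrence: if they kill `x`,
the blocks `x^{(k)}, x^{(k-1)}, …, x^{(1)}` satisfy the recurrence of `φ_0(λ₀), φ_1(λ₀), …`, so,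
as every `α_j ≠ 0`, `x = Φ_k(λ₀) ⊗ x^{(k)}`. Conversely `M_Φ(λ₀) Φ_k(λ₀) = 0`, and the first
block row sends `Φ_k(λ₀) ⊗ w` to `D(λ₀) w`, the two corrections in `m_Φ^D` adding up to
`D_k φ_k(λ₀)`.

Since `X` and `K₀` are invertible and `K₀ (e₁ ⊗ z) = (v ⊗ I_m) z`, the equation `𝓛₀ (y; x) = 0`
amounts to `Λ₀ Y y + B x^{(k)} = 0` together with `F_Φ^D(λ₀) x = e₁ ⊗ C Y y`. Eliminating
`Y y = -Λ₀⁻¹ B x^{(k)}` turns the first block row into `G₀ x^{(k)} = 0`, and both directions follow.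
-/

section Recurrence

variable {K : Type*} [Field K] (α β γ : ℕ → K) (lam0 : K)

def recurrenceDefect (f : ℕ → K) (j : ℕ) : K :=
  (lam0 - β j) * f j - γ j * (if j = 0 then 0 else f (j - 1)) - α j * f (j + 1)

theorem eq_mul_of_recurrenceDefect_eq_zero {ψ f : ℕ → K} (hα : ∀ j, α j ≠ 0) (hψ0 : ψ 0 = 1)
    (hψ : ∀ j, recurrenceDefect α β γ lam0 ψ j = 0) {N : ℕ}
    (hf : ∀ j < N, recurrenceDefect α β γ lam0 f j = 0) :
    ∀ t ≤ N, f t = ψ t * f 0 := by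
  intro t
  induction t using Nat.strong_induction_on with
  | _ t ih =>
    intro ht
    rcases t with _ | s
    · rw [hψ0, one_mul]
    · have hprev : (if s = 0 then 0 else f (s - 1))
          = (if s = 0 then 0 else ψ (s - 1)) * f 0 := by
        split_ifs
        · rw [zero_mul]
        · exact ih (s - 1) (by omega) (by omega)
      have hfs := hf s (by omega)
      have hψs := hψ s
      rw [recurrenceDefect, hprev, ih s (by omega) (by omega)] at hfs
      rw [recurrenceDefect] at hψs
      refine mul_left_cancel₀ (hα s) ?_
      linear_combination -hfs + f 0 * hψs

end Recurrence

section Blocks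

variable {K : Type*} [Field K] {k m : ℕ}

def kronVec (a : Fin k → K) (w : Fin m → K) : Fin k × Fin m → K := fun p => a p.1 * w p.2

theorem kronVec_zero (a : Fin k → K) : kronVec a (0 : Fin m → K) = 0 := by
  ext
  simp [kronVec]

def firstBlock (z : Fin m → K) : Fin k × Fin m → K :=
  fun p => if (p.1 : ℕ) = 0 then z p.2 else 0

def lastBlock (hk : 0 < k) (x : Fin k × Fin m → K) : Fin m → K :=
  fun r => x (⟨k - 1, by omega⟩, r)

def lastBlockRow {ι : Type*} (k : ℕ) (M : Matrix ι (Fin m) K) : Matrix ι (Fin k × Fin m) K :=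
  of fun r q => if (q.1 : ℕ) = k - 1 then M r q.2 else 0

theorem lastBlockRow_mulVec {ι : Type*} (hk : 0 < k) (M : Matrix ι (Fin m) K)
    (x : Fin k × Fin m → K) : lastBlockRow k M *ᵥ x = M *ᵥ lastBlock hk x := by
  ext r
  simp only [mulVec, dotProduct, lastBlockRow, of_apply, Fintype.sum_prod_type, ite_mul, zero_mul]
  rw [Fintype.sum_eq_single ⟨k - 1, by omega⟩ fun j hj => ?_]
  · simp [lastBlock]
  · exact Finset.sum_eq_zero fun s _ => if_neg fun h => hj (Fin.ext h)

theorem concatKron_mulVec_firstBlock (v : Fin k → K)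
    (H : Matrix (Fin k × Fin m) (Fin (k - 1) × Fin m) K) (z : Fin m → K) :
    concatKron k m v H *ᵥ firstBlock z = vKron k m v *ᵥ z := by
  ext ⟨i, r⟩
  simp only [mulVec, dotProduct, firstBlock, mul_ite, mul_zero, Fintype.sum_prod_type]
  rw [Fintype.sum_eq_single ⟨0, Fin.pos i⟩ fun j hj => ?_]
  · simp [concatKron, vKron]
  · exact Finset.sum_eq_zero fun s _ => if_neg fun h => hj (Fin.ext h)

theorem linearization_mulVec_eq_zero_iff {ι : Type*} [Fintype ι] [DecidableEq ι] (hk : 0 < k)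
    {X Λ Y : Matrix ι ι K} {B : Matrix ι (Fin m) K} {C : Matrix (Fin m) ι K} {v : Fin k → K}
    {H : Matrix (Fin k × Fin m) (Fin (k - 1) × Fin m) K}
    {F : Matrix (Fin k × Fin m) (Fin k × Fin m) K} (hX : IsUnit X.det) (hΛ : IsUnit Λ.det)
    (hK₀ : IsUnit (concatKron k m v H).det) (y : ι → K) (x : Fin k × Fin m → K) :
    fromBlocks (X * Λ * Y) (lastBlockRow k (X * B)) (-(vKron k m v * C * Y))
        (concatKron k m v H * F) *ᵥ Sum.elim y x = 0 ↔
      Y *ᵥ y = -((Λ⁻¹ * B) *ᵥ lastBlock hk x) ∧ F *ᵥ x = firstBlock ((C * Y) *ᵥ y) := by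
  have htop : (X * Λ * Y) *ᵥ y + lastBlockRow k (X * B) *ᵥ x
      = (X * Λ) *ᵥ (Y *ᵥ y + (Λ⁻¹ * B) *ᵥ lastBlock hk x) := by
    rw [lastBlockRow_mulVec hk, mulVec_add, mulVec_mulVec, mulVec_mulVec,
      Matrix.mul_assoc X Λ (Λ⁻¹ * B), mul_nonsing_inv_cancel_left _ _ hΛ]
  have hbot : -(vKron k m v * C * Y) *ᵥ y + (concatKron k m v H * F) *ᵥ x
      = concatKron k m v H *ᵥ (F *ᵥ x - firstBlock ((C * Y) *ᵥ y)) := by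
    rw [mulVec_sub, concatKron_mulVec_firstBlock, neg_mulVec, mulVec_mulVec, mulVec_mulVec,
      Matrix.mul_assoc, neg_add_eq_sub]
  have hXΛ : (X * Λ).det ≠ 0 := by
    rw [det_mul]
    exact (hX.mul hΛ).ne_zero
  rw [fromBlocks_mulVec, ← Sum.elim_zero_zero, Sum.elim_eq_iff, Sum.elim_comp_inl,
    Sum.elim_comp_inr, htop, hbot, (mulVec_injective_of_det_ne_zero hXΛ).eq_iff' (mulVec_zero _),
    (mulVec_injective_of_det_ne_zero hK₀.ne_zero).eq_iff' (mulVec_zero _), sub_eq_zero,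
    eq_neg_iff_add_eq_zero]

end Blocks

section Pencil

variable {K : Type*} [Field K] (α β γ : ℕ → K) (lam0 : K) {k m : ℕ}
  (D : ℕ → Matrix (Fin m) (Fin m) K)

def phiVec (k : ℕ) (ψ : ℕ → K) : Fin k → K := fun j => ψ (k - 1 - j)

theorem sum_MPhiEval_mul_rev (i : Fin (k - 1)) (f : ℕ → K) :
    ∑ j : Fin k, MPhiEval α β γ k lam0 i j * f (k - 1 - j)
      = recurrenceDefect α β γ lam0 f (k - 2 - i) := by
  obtain ⟨i, hi⟩ := i
  obtain ⟨s, rfl⟩ : ∃ s, k = i + 2 + s := ⟨k - (i + 2), by omega⟩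
  have hs : i + 2 + s - 2 - i = s := by omega
  simp only [MPhiEval, of_apply, hs]
  rw [Fin.sum_univ_eq_sum_range (fun j => (if j = i then -α s else if j = i + 1 then lam0 - β s
    else if j = i + 2 then -γ s else 0) * f (i + 2 + s - 1 - j))]
  have hterm : ∀ j, (if j = i then -α s else if j = i + 1 then lam0 - β s
      else if j = i + 2 then -γ s else 0) * f (i + 2 + s - 1 - j)
      = (if j = i then -α s * f (i + 2 + s - 1 - j) else 0)
        + (if j = i + 1 then (lam0 - β s) * f (i + 2 + s - 1 - j) else 0)
        + (if j = i + 2 then -γ s * f (i + 2 + s - 1 - j) else 0) := by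
    intro j
    split_ifs <;> first | omega | ring
  simp only [hterm, Finset.sum_add_distrib, Finset.sum_ite_eq', Finset.mem_range]
  rw [if_pos (by omega), if_pos (by omega), show i + 2 + s - 1 - i = s + 1 by omega,
    show i + 2 + s - 1 - (i + 1) = s by omega, show i + 2 + s - 1 - (i + 2) = s - 1 by omega]
  rcases s with _ | s
  · rw [if_neg (by omega), recurrenceDefect, if_pos rfl]
    ring
  · rw [if_pos (by omega), recurrenceDefect, if_neg (Nat.succ_ne_zero s)]
    ring

theorem sum_mPhiEval_mul_rev (hk : 2 ≤ k) (hα : α (k - 1) ≠ 0) {ψ : ℕ → K}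
    (hψ : recurrenceDefect α β γ lam0 ψ (k - 1) = 0) (r s : Fin m) :
    ∑ j : Fin k, mPhiEval α β γ k m D lam0 r (j, s) * ψ (k - 1 - j)
      = ∑ i ∈ Finset.range (k + 1), ψ i * D i r s := by
  rw [recurrenceDefect, if_neg (by omega), Nat.sub_add_cancel (by omega), Nat.sub_sub] at hψ
  have hterm : ∀ j : Fin k, mPhiEval α β γ k m D lam0 r (j, s) * ψ (k - 1 - j)
      = ψ (k - 1 - j) * D (k - 1 - j) r s
        + (if (j : ℕ) = 0 then (α (k - 1))⁻¹ * (lam0 - β (k - 1)) * D k r s * ψ (k - 1) else 0)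
        - (if (j : ℕ) = 1 then (α (k - 1))⁻¹ * γ (k - 1) * D k r s * ψ (k - 2) else 0) := by
    rintro ⟨_ | _ | j, hj⟩ <;>
      simp only [mPhiEval, of_apply, Nat.sub_sub, zero_add, add_zero, sub_zero, ↓reduceIte,
        one_ne_zero, zero_ne_one, Nat.add_eq_zero_iff, and_false, Nat.add_eq_right,
        Nat.reduceAdd, tsub_zero] <;>
      ring
  simp only [hterm, Finset.sum_add_distrib, Finset.sum_sub_distrib]
  rw [Fin.sum_univ_eq_sum_range (fun j => ψ (k - 1 - j) * D (k - 1 - j) r s),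
    Fin.sum_univ_eq_sum_range (fun j => if j = 0 then _ else 0),
    Fin.sum_univ_eq_sum_range (fun j => if j = 1 then _ else 0),
    Finset.sum_ite_eq', Finset.sum_ite_eq', Finset.sum_range_reflect (fun j => ψ j * D j r s),
    Finset.sum_range_succ, if_pos (by simp; omega), if_pos (by simp; omega)]
  field_simp
  linear_combination D k r s * hψ

theorem FPhiEval_mulVec_apply_of_eq_zero (x : Fin k × Fin m → K) {i : Fin k} (hi : (i : ℕ) = 0)
    (r : Fin m) :
    (FPhiEval α β γ k m D lam0 *ᵥ x) (i, r) = (mPhiEval α β γ k m D lam0 *ᵥ x) r := by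
  simp [FPhiEval, mulVec, dotProduct, hi]

theorem FPhiEval_mulVec_apply_of_ne_zero (x : Fin k × Fin m → K) {i : Fin k} (hi : (i : ℕ) ≠ 0)
    (r : Fin m) :
    (FPhiEval α β γ k m D lam0 *ᵥ x) (i, r)
      = ∑ j : Fin k, MPhiEval α β γ k lam0 ⟨i - 1, by omega⟩ j * x (j, r) := by
  simp [FPhiEval, mulVec, dotProduct, hi, Fintype.sum_prod_type]

theorem FPhiEval_mulVec_kronVec (hk : 2 ≤ k) (hα : α (k - 1) ≠ 0) {ψ : ℕ → K}
    (hψ : ∀ j, recurrenceDefect α β γ lam0 ψ j = 0) (w : Fin m → K) :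
    FPhiEval α β γ k m D lam0 *ᵥ kronVec (phiVec k ψ) w
      = firstBlock ((∑ i ∈ Finset.range (k + 1), ψ i • D i) *ᵥ w) := by
  ext ⟨i, r⟩
  by_cases hi : (i : ℕ) = 0
  · rw [FPhiEval_mulVec_apply_of_eq_zero (hi := hi)]
    simp only [firstBlock, if_pos hi, mulVec, dotProduct, Fintype.sum_prod_type, kronVec, phiVec]
    rw [Finset.sum_comm]
    refine Finset.sum_congr rfl fun s _ => ?_
    simp only [← mul_assoc, ← Finset.sum_mul, sum_mPhiEval_mul_rev α β γ lam0 D hk hα (hψ _),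
      Matrix.sum_apply, Matrix.smul_apply, smul_eq_mul]
  · rw [FPhiEval_mulVec_apply_of_ne_zero (hi := hi)]
    simp only [firstBlock, if_neg hi, kronVec, phiVec, ← mul_assoc, ← Finset.sum_mul,
      sum_MPhiEval_mul_rev, hψ, zero_mul]

theorem eq_kronVec_of_FPhiEval_mulVec_eq_firstBlock (hk : 0 < k) (hα : ∀ j, α j ≠ 0)
    {ψ : ℕ → K} (hψ0 : ψ 0 = 1) (hψ : ∀ j, recurrenceDefect α β γ lam0 ψ j = 0)
    {x : Fin k × Fin m → K} {z : Fin m → K}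
    (hx : FPhiEval α β γ k m D lam0 *ᵥ x = firstBlock z) :
    x = kronVec (phiVec k ψ) (lastBlock hk x) := by
  ext ⟨j, r⟩
  let f : ℕ → K := fun t => if h : t < k then x (⟨k - 1 - t, by omega⟩, r) else 0
  have hfx : ∀ j : Fin k, f (k - 1 - j) = x (j, r) := fun j => by
    simp only [f, dif_pos (by omega : k - 1 - j < k)]
    congr
    omega
  have hrec : ∀ s < k - 1, recurrenceDefect α β γ lam0 f s = 0 := by
    intro s hs
    have hrow := congrFun hx (⟨k - 1 - s, by omega⟩, r)
    rw [FPhiEval_mulVec_apply_of_ne_zero (hi := by simp only; omega)] at hrow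
    simp only [firstBlock, ← hfx, sum_MPhiEval_mul_rev] at hrow
    rwa [show k - 2 - (k - 1 - s - 1) = s by omega, if_neg (by omega)] at hrow
  have hxj := eq_mul_of_recurrenceDefect_eq_zero α β γ lam0 hα hψ0 hψ hrec (k - 1 - j) (by omega)
  rw [hfx] at hxj
  simpa [kronVec, phiVec, lastBlock, f, hk] using hxj

end Pencil

theorem recovery_right_eigenvectors_M1
    {K : Type*} [Field K] {m n k : ℕ} (hk : 2 ≤ k)
    (α β γ : ℕ → K) (hα : ∀ j, α j ≠ 0) (lam0 : K)
    (ψ : ℕ → K) (hψ0 : ψ 0 = 1)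
    (hψrec : ∀ j : ℕ, α j * ψ (j + 1)
      = (lam0 - β j) * ψ j - γ j * (if j = 0 then 0 else ψ (j - 1)))
    (D : ℕ → Matrix (Fin m) (Fin m) K)
    (X Y : Matrix (Fin n) (Fin n) K) (B : Matrix (Fin n) (Fin m) K)
    (C : Matrix (Fin m) (Fin n) K)
    (v : Fin k → K) (H : Matrix (Fin k × Fin m) (Fin (k - 1) × Fin m) K)
    (hX : IsUnit X.det) (hY : IsUnit Y.det)
    (hK0 : IsUnit (concatKron k m v H).det)
    (Λ₀ : Matrix (Fin n) (Fin n) K)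
    (hAreg : IsUnit Λ₀.det)
    (G₀ : Matrix (Fin m) (Fin m) K)
    (hG₀ : G₀ = (∑ i ∈ Finset.range (k + 1), ψ i • D i) + C * Λ₀⁻¹ * B)
    (L₀ : Matrix (Fin k × Fin m) (Fin k × Fin m) K)
    (hL₀ : L₀ = concatKron k m v H * FPhiEval α β γ k m D lam0)
    (𝓛₀ : Matrix (Fin n ⊕ (Fin k × Fin m)) (Fin n ⊕ (Fin k × Fin m)) K)
    (h𝓛₀ : 𝓛₀ = Matrix.fromBlocks (X * Λ₀ * Y)
        (Matrix.of fun r (q : Fin k × Fin m) =>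
          if (q.1 : ℕ) = k - 1 then (X * B) r q.2 else 0)
        (-(vKron k m v * C * Y)) L₀) :
    (∀ (y : Fin n → K) (x : Fin k × Fin m → K),
      𝓛₀ *ᵥ Sum.elim y x = 0 → Sum.elim y x ≠ 0 →
        (fun r : Fin m => x (⟨k - 1, by omega⟩, r)) ≠ 0 ∧
        x = (fun p : Fin k × Fin m =>
          ψ (k - 1 - (p.1 : ℕ)) * x (⟨k - 1, by omega⟩, p.2)) ∧
        G₀ *ᵥ (fun r : Fin m => x (⟨k - 1, by omega⟩, r)) = 0) ∧
    (∀ u : Fin m → K, G₀ *ᵥ u = 0 → u ≠ 0 →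
      𝓛₀ *ᵥ Sum.elim (-((Y⁻¹ * Λ₀⁻¹ * B) *ᵥ u))
          (fun p : Fin k × Fin m => ψ (k - 1 - (p.1 : ℕ)) * u p.2) = 0 ∧
      Sum.elim (-((Y⁻¹ * Λ₀⁻¹ * B) *ᵥ u))
          (fun p : Fin k × Fin m => ψ (k - 1 - (p.1 : ℕ)) * u p.2) ≠ 0) := by
  have hk0 : 0 < k := by omega
  have hψ : ∀ j, recurrenceDefect α β γ lam0 ψ j = 0 := fun j => by
    rw [recurrenceDefect, ← hψrec, sub_self]
  subst hG₀ hL₀ h𝓛₀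
  have hsolve := linearization_mulVec_eq_zero_iff hk0 (Y := Y) (B := B) (C := C)
    (F := FPhiEval α β γ k m D lam0) hX hAreg hK0
  constructor
  · intro y x hLx hne
    show lastBlock hk0 x ≠ 0 ∧ x = kronVec (phiVec k ψ) (lastBlock hk0 x) ∧
      _ *ᵥ lastBlock hk0 x = 0
    obtain ⟨htop, hbot⟩ := (hsolve y x).mp hLx
    have hx := eq_kronVec_of_FPhiEval_mulVec_eq_firstBlock α β γ lam0 D hk0 hα hψ0 hψ hbot
    rw [hx, FPhiEval_mulVec_kronVec α β γ lam0 D hk (hα _) hψ] at hbot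
    have hPx : (∑ i ∈ Finset.range (k + 1), ψ i • D i) *ᵥ lastBlock hk0 x = (C * Y) *ᵥ y :=
      funext fun r => by simpa [firstBlock] using congrFun hbot (⟨0, hk0⟩, r)
    refine ⟨fun hw => hne ?_, hx, ?_⟩
    · rw [hw, mulVec_zero, neg_zero] at htop
      rw [hx, hw, kronVec_zero, eq_zero_of_mulVec_eq_zero hY.ne_zero htop, Sum.elim_zero_zero]
    · rw [add_mulVec, hPx, ← mulVec_mulVec, htop, mulVec_neg, mulVec_mulVec, Matrix.mul_assoc,
        neg_add_cancel]
  · intro u hGu hu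
    have hlast : lastBlock hk0 (kronVec (phiVec k ψ) u) = u := by
      ext r
      simp [lastBlock, kronVec, phiVec, hψ0]
    have hYy : Y *ᵥ -((Y⁻¹ * Λ₀⁻¹ * B) *ᵥ u) = -((Λ₀⁻¹ * B) *ᵥ u) := by
      rw [mulVec_neg, mulVec_mulVec, Matrix.mul_assoc, mul_nonsing_inv_cancel_left _ _ hY]
    refine ⟨(hsolve _ (kronVec (phiVec k ψ) u)).mpr ⟨by rw [hYy, hlast], ?_⟩, fun h => hu ?_⟩
    · rw [FPhiEval_mulVec_kronVec α β γ lam0 D hk (hα _) hψ, ← mulVec_mulVec, hYy, mulVec_neg,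
        mulVec_mulVec, ← Matrix.mul_assoc,
        ← eq_neg_of_add_eq_zero_left ((add_mulVec _ _ u).symm.trans hGu)]
    · rw [← hlast]
      ext r
      exact congrFun h (Sum.inr (⟨k - 1, by omega⟩, r))
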